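/- arXiv:1604.03997 — 2 statements merged into one kernel-verified Lean document; each statement's English description precedes it below -/
import Mathlib

section
/- Let Γ ⊂ ℝⁿ be a Meyer set and S ⊂ ℝⁿ a centrally symmetric convex body. Then the sum over all u ∈ S of the frequency ρ_Γ(u) satisfies ∑_{u∈S} ρ_Γ(u) ≥ D⁺(Γ)·Vol(S/2). -/
open Filter MeasureTheory Metric Pointwise

variable {E : Type*} [NormedAddCommGroup E] [MeasureSpace E]

/-- The uniform `R`-density of a set. -/
noncomputable def densR (Γ : Set E) (R : ℝ) : ℝ :=
  ⨆ x : E, ((Γ ∩ ball x R).ncard : ℝ) / (volume (ball x R)).toReal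

/-- The uniform upper density of a set. -/
noncomputable def upDens (Γ : Set E) : ℝ := limsup (densR Γ) atTop

/-- Uniformly discrete: balls of radius `r` contain at most one point. -/
def UnifDisc (Γ : Set E) : Prop := ∃ r > 0, ∀ x : E, (Γ ∩ closedBall x r).Subsingleton

/-- Relatively dense: balls of radius `R` contain at least one point. -/
def RelDense (Γ : Set E) : Prop := ∃ R > 0, ∀ x : E, (Γ ∩ closedBall x R).Nonempty

def Delone (Γ : Set E) : Prop := UnifDisc Γ ∧ RelDense Γ

def Meyer (Γ : Set E) : Prop := Delone Γ ∧ Delone (Γ - Γ)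

/-- Frequency of the difference `v` in `Γ`. -/
noncomputable def freq (Γ : Set E) (v : E) : ℝ :=
  upDens {x ∈ Γ | x + v ∈ Γ} / upDens Γ

/-- Weakly almost periodic set. -/
def WAP (Γ : Set E) : Prop :=
  Delone Γ ∧ ∀ ε > 0, ∃ R > 0, ∀ x y : E, ∃ v : E,
    ((symmDiff (Γ ∩ ball x R) ((fun z => z - v) '' (Γ ∩ ball y R))).ncard : ℝ)
      ≤ ε * (volume (ball (0 : E) R)).toReal

/-!
For a finite set `P` of points of a ball `B(x, R)`, the translates `y + S/2`, `y ∈ P`, lie in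
`B(x, R + ρ)`, and two of them can only meet when the difference of their centres lies in
`S/2 - S/2 = S`. Cauchy–Schwarz applied to the sum of their indicator functions gives
`#P² vol(S/2) ≤ vol B(x, R + ρ) · #{(y, z) ∈ P² | z - y ∈ S}`, and these pairs are counted
difference by difference. For `P = Γ ∩ B(x, R)` this reads
`D_R(Γ)² vol(S/2) ≤ (1 + o(1)) ∑_{u ∈ S ∩ (Γ - Γ)} D_R(Γ ∩ (Γ - u))`, a finite sum since `Γ - Γ`
is uniformly discrete, and `R → ∞` gives `D⁺(Γ)² vol(S/2) ≤ ∑_u D⁺(Γ ∩ (Γ - u))`.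
The same inequality, with `S` a ball smaller than the separation radius of `Γ`, is the packing
bound that makes the densities of a uniformly discrete set finite.
-/

open Topology
open scoped ENNReal Finset

theorem lintegral_sq_le_measure_mul_lintegral_sq {α : Type*} [MeasurableSpace α]
    {μ : Measure α} {f : α → ℝ≥0∞} {B : Set α} (hf : AEMeasurable f μ)
    (hB : MeasurableSet B) (hfB : Function.support f ⊆ B) :
    (∫⁻ a, f a ∂μ) ^ 2 ≤ μ B * ∫⁻ a, f a ^ 2 ∂μ := by
  set g : α → ℝ≥0∞ := B.indicator 1
  have hfg : f = f * g := by
    ext a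
    by_cases ha : a ∈ B
    · simp [g, ha]
    · simp [g, ha, Function.notMem_support.1 (mt (@hfB a) ha)]
  have hg : ∫⁻ a, g a ^ (2 : ℝ) ∂μ = μ B := by
    rw [← lintegral_indicator_one hB]
    congr with a
    by_cases ha : a ∈ B <;> simp [g, ha]
  have hholder := ENNReal.lintegral_mul_le_Lp_mul_Lq μ Real.HolderConjugate.two_two hf
    (g := g) (aemeasurable_one.indicator hB)
  rw [← hfg, hg] at hholder
  calc (∫⁻ a, f a ∂μ) ^ 2
      ≤ ((∫⁻ a, f a ^ (2 : ℝ) ∂μ) ^ (1 / 2 : ℝ) * μ B ^ (1 / 2 : ℝ)) ^ 2 := by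
        gcongr
    _ = μ B * ∫⁻ a, f a ^ 2 ∂μ := by
      simp_rw [mul_pow, ← ENNReal.rpow_mul_natCast, ENNReal.rpow_two]
      norm_num [mul_comm]

theorem sq_limsup_mul_le_sum_limsup {α ι : Type*} {l : Filter α} {f a : α → ℝ}
    {g : ι → α → ℝ} {F : Finset ι} {c : ℝ} (hc : 0 ≤ c) (hpos : 0 < limsup f l)
    (hf : IsCoboundedUnder (· ≤ ·) l f) (hg : ∀ u ∈ F, IsBoundedUnder (· ≤ ·) l (g u))
    (hg0 : ∀ u x, 0 ≤ g u x) (ha : Tendsto a l (𝓝 1))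
    (h : ∀ᶠ x in l, f x ^ 2 * c ≤ a x * ∑ u ∈ F, g u x) :
    limsup f l ^ 2 * c ≤ ∑ u ∈ F, limsup (g u) l := by
  set D := limsup f l
  set T := ∑ u ∈ F, limsup (g u) l
  have key : ∀ ε ∈ Set.Ioo 0 D, (D - ε) ^ 2 * c ≤ (1 + ε) * (T + #F * ε) := by
    rintro ε ⟨hε, hεD⟩
    have hg_lt : ∀ᶠ x in l, ∀ u ∈ F, g u x < limsup (g u) l + ε :=
      (eventually_all_finset F).2 fun u hu =>
        eventually_lt_of_limsup_lt (lt_add_of_pos_right _ hε) (hg u hu)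
    obtain ⟨x, hfx, hx, hgx, hax⟩ :=
      ((frequently_lt_of_lt_limsup hf (sub_lt_self D hε)).and_eventually
        (h.and (hg_lt.and (ha.eventually (ge_mem_nhds (lt_add_of_pos_right 1 hε)))))).exists
    calc (D - ε) ^ 2 * c ≤ f x ^ 2 * c := by gcongr
      _ ≤ a x * ∑ u ∈ F, g u x := hx
      _ ≤ (1 + ε) * ∑ u ∈ F, (limsup (g u) l + ε) := by
        gcongr with u hu
        · exact Finset.sum_nonneg fun u _ => hg0 u x
        · exact (hgx u hu).le
      _ = (1 + ε) * (T + #F * ε) := by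
        rw [Finset.sum_add_distrib, Finset.sum_const, nsmul_eq_mul]
  have hcont : Continuous fun ε : ℝ => (1 + ε) * (T + #F * ε) - (D - ε) ^ 2 * c := by fun_prop
  have hlim := ge_of_tendsto ((hcont.tendsto 0).mono_left nhdsWithin_le_nhds)
    (Filter.mem_of_superset (Ioo_mem_nhdsGT hpos) fun ε hε => sub_nonneg.2 (key ε hε))
  simpa using hlim

theorem Convex.inv_two_smul_sub_inv_two_smul {V : Type*} [AddCommGroup V] [Module ℝ V]
    {S : Set V} (hS : Convex ℝ S) (hSsymm : S = -S) :
    (2⁻¹ : ℝ) • S - (2⁻¹ : ℝ) • S = S := by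
  rw [sub_eq_add_neg, ← Set.smul_set_neg, ← hSsymm, ← hS.add_smul (by norm_num) (by norm_num)]
  norm_num

section Overlap

variable {G : Type*} [AddCommGroup G] [MeasurableSpace G]
  (μ : Measure G) [μ.IsAddLeftInvariant]

open Classical in
theorem measure_vadd_inter_vadd_le {K S : Set G} (hKS : K - K ⊆ S) (y z : G) :
    μ ((y +ᵥ K) ∩ (z +ᵥ K)) ≤ if z - y ∈ S then μ K else 0 := by
  split_ifs with hyz
  · exact (measure_mono Set.inter_subset_left).trans (measure_vadd μ y K).le
  · have hdisj : (y +ᵥ K) ∩ (z +ᵥ K) = ∅ := by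
      refine Set.not_nonempty_iff_eq_empty.1 ?_
      rintro ⟨_, ⟨a, ha, rfl⟩, ⟨b, hb, hab⟩⟩
      refine hyz (hKS ⟨a, ha, b, hb, ?_⟩)
      simp only [vadd_eq_add] at hab
      rw [sub_eq_sub_iff_add_eq_add, hab, add_comm]
    rw [hdisj, measure_empty]

open Classical in
theorem card_sq_mul_measure_le [MeasurableAdd G] {P : Finset G} {K S B : Set G}
    (hK : MeasurableSet K) (hKfin : μ K ≠ ∞) (hKS : K - K ⊆ S) (hB : MeasurableSet B)
    (hPB : ∀ y ∈ P, y +ᵥ K ⊆ B) :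
    (#P : ℝ≥0∞) ^ 2 * μ K ≤ μ B * #{p ∈ P ×ˢ P | p.2 - p.1 ∈ S} := by
  set h : G → ℝ≥0∞ := fun a => ∑ y ∈ P, ((y : G) +ᵥ K).indicator 1 a
  have hmeas : ∀ y : G, Measurable ((y +ᵥ K).indicator (1 : G → ℝ≥0∞)) := fun y =>
    measurable_one.indicator (hK.const_vadd y)
  have h_int : ∫⁻ a, h a ∂μ = #P * μ K := by
    rw [lintegral_finsetSum _ fun y _ => hmeas y]
    simp [lintegral_indicator_one (hK.const_vadd _), measure_vadd]
  have h_sq : ∫⁻ a, h a ^ 2 ∂μ ≤ #{p ∈ P ×ˢ P | p.2 - p.1 ∈ S} * μ K := by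
    calc ∫⁻ a, h a ^ 2 ∂μ = ∑ y ∈ P, ∑ z ∈ P, μ ((y +ᵥ K) ∩ (z +ᵥ K)) := by
          have hmeas₂ : ∀ y z : G, MeasurableSet ((y +ᵥ K) ∩ (z +ᵥ K)) := fun y z =>
            (hK.const_vadd y).inter (hK.const_vadd z)
          have hpt : ∀ a,
              h a ^ 2 = ∑ y ∈ P, ∑ z ∈ P, ((y +ᵥ K) ∩ (z +ᵥ K)).indicator 1 a := fun a => by
            simp [h, sq, Finset.sum_mul_sum, Set.inter_indicator_one]
          rw [lintegral_congr hpt, lintegral_finsetSum _ fun y _ =>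
            Finset.measurable_sum _ fun z _ => measurable_one.indicator (hmeas₂ y z)]
          refine Finset.sum_congr rfl fun y _ => ?_
          rw [lintegral_finsetSum _ fun z _ => measurable_one.indicator (hmeas₂ y z)]
          simp_rw [lintegral_indicator_one (hmeas₂ _ _)]
      _ ≤ ∑ y ∈ P, ∑ z ∈ P, if z - y ∈ S then μ K else 0 := by
          gcongr with y _ z _
          exact measure_vadd_inter_vadd_le μ hKS y z
      _ = #{p ∈ P ×ˢ P | p.2 - p.1 ∈ S} * μ K := by
          rw [← Finset.sum_product', ← Finset.sum_filter, Finset.sum_const, nsmul_eq_mul]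
  have h_supp : Function.support h ⊆ B := by
    intro a ha
    obtain ⟨y, hy, hya⟩ := Finset.exists_ne_zero_of_sum_ne_zero ha
    exact hPB y hy (Set.mem_of_indicator_ne_zero hya)
  have hcs := lintegral_sq_le_measure_mul_lintegral_sq
    (μ := μ) (Finset.measurable_sum _ fun y _ => hmeas y).aemeasurable hB h_supp
  rcases eq_or_ne (μ K) 0 with hK0 | hK0
  · simp [hK0]
  rw [← ENNReal.mul_le_mul_iff_left hK0 hKfin]
  calc (#P : ℝ≥0∞) ^ 2 * μ K * μ K = (∫⁻ a, h a ∂μ) ^ 2 := by rw [h_int]; ring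
    _ ≤ μ B * (#{p ∈ P ×ˢ P | p.2 - p.1 ∈ S} * μ K) := hcs.trans (by gcongr)
    _ = _ := by ring

end Overlap

theorem densR_nonneg (Γ : Set E) (R : ℝ) : 0 ≤ densR Γ R :=
  Real.iSup_nonneg fun _ => div_nonneg (Nat.cast_nonneg _) ENNReal.toReal_nonneg

theorem upDens_empty : upDens (∅ : Set E) = 0 := by
  rw [upDens, show densR (∅ : Set E) = fun _ => 0 from funext fun R => by simp [densR],
    limsup_const]

theorem freq_eq_zero_of_notMem_sub {Γ : Set E} {v : E} (hv : v ∉ Γ - Γ) : freq Γ v = 0 := by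
  have hempty : {x ∈ Γ | x + v ∈ Γ} = ∅ :=
    Set.eq_empty_of_forall_notMem fun x ⟨hx, hxv⟩ => hv (by simpa using Set.sub_mem_sub hxv hx)
  rw [freq, hempty, upDens_empty, zero_div]

theorem tsum_freq_eq_sum {Γ S : Set E} {F : Finset E} (hF : ↑F = (Γ - Γ) ∩ S) :
    ∑' u : S, freq Γ u = (∑ u ∈ F, upDens {x ∈ Γ | x + u ∈ Γ}) / upDens Γ := by
  rw [tsum_subtype, tsum_eq_sum (s := F), Finset.sum_div]
  · refine Finset.sum_congr rfl fun u hu => ?_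
    have hu' : u ∈ (Γ - Γ) ∩ S := hF ▸ hu
    rw [Set.indicator_of_mem hu'.2, freq]
  · intro u hu
    by_cases huS : u ∈ S
    · rw [Set.indicator_of_mem huS]
      exact freq_eq_zero_of_notMem_sub fun hΔ => hu (hF ▸ ⟨hΔ, huS⟩ : u ∈ (F : Set E))
    · exact Set.indicator_of_notMem huS _

namespace UnifDisc

variable {X : Type*} [NormedAddCommGroup X] {Γ Γ' : Set X}

theorem mono (hΓ : UnifDisc Γ) (h : Γ' ⊆ Γ) : UnifDisc Γ' :=
  let ⟨r, hr, hsub⟩ := hΓ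
  ⟨r, hr, fun x => (hsub x).anti (Set.inter_subset_inter_left _ h)⟩

theorem finite_inter [ProperSpace X] (hΓ : UnifDisc Γ) {s : Set X}
    (hs : Bornology.IsBounded s) : (Γ ∩ s).Finite := by
  obtain ⟨r, hr, hsub⟩ := hΓ
  obtain ⟨t, htf, hcov⟩ := totallyBounded_iff.1
    (hs.isCompact_closure.totallyBounded.subset subset_closure) r hr
  refine (htf.biUnion fun y _ => (hsub y).finite).subset ?_
  rintro z ⟨hzΓ, hzs⟩
  obtain ⟨y, hy, hzy⟩ := Set.mem_iUnion₂.1 (hcov hzs)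
  exact Set.mem_iUnion₂.2 ⟨y, hy, hzΓ, ball_subset_closedBall hzy⟩

end UnifDisc

theorem toReal_measure_ball_pos [ProperSpace E] [(volume : Measure E).IsAddHaarMeasure] (x : E)
    {R : ℝ} (hR : 0 < R) : 0 < (volume (ball x R)).toReal :=
  ENNReal.toReal_pos (measure_ball_pos _ _ hR).ne' measure_ball_lt_top.ne

section Haar

variable [NormedSpace ℝ E] [FiniteDimensional ℝ E] [BorelSpace E]
  [(volume : Measure E).IsAddHaarMeasure]

theorem tendsto_measure_ball_add_div_measure_ball (ρ : ℝ) :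
    Tendsto (fun R => (volume (ball (0 : E) (R + ρ))).toReal / (volume (ball (0 : E) R)).toReal)
      atTop (𝓝 1) := by
  set d := Module.finrank ℝ E
  have hvol : ∀ r : ℝ, 0 < r →
      (volume (ball (0 : E) r)).toReal = r ^ d * (volume (ball (0 : E) 1)).toReal := fun r hr => by
    rw [Measure.addHaar_ball_of_pos _ _ hr, ENNReal.toReal_mul,
      ENNReal.toReal_ofReal (by positivity)]
  have hlim : Tendsto (fun R : ℝ => (1 + ρ * R⁻¹) ^ d) atTop (𝓝 1) := by
    simpa using ((tendsto_inv_atTop_zero.const_mul ρ).const_add 1).pow d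
  refine hlim.congr' ?_
  filter_upwards [eventually_gt_atTop |ρ|] with R hR
  have hR0 : 0 < R := (abs_nonneg ρ).trans_lt hR
  rw [hvol R hR0, hvol (R + ρ) (by linarith [neg_abs_le ρ]),
    mul_div_mul_right _ _ (toReal_measure_ball_pos 0 one_pos).ne', ← div_pow, add_div,
    div_self hR0.ne', div_eq_mul_inv]

open Classical in
theorem card_sq_mul_le_of_subset_ball {P : Finset E} {K S : Set E} {x : E} {R ρ : ℝ}
    (hP : ↑P ⊆ ball x R) (hK : MeasurableSet K) (hKfin : volume K ≠ ∞) (hKS : K - K ⊆ S)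
    (hKρ : K ⊆ ball 0 ρ) :
    (#P : ℝ) ^ 2 * (volume K).toReal
      ≤ (volume (ball (0 : E) (R + ρ))).toReal * #{p ∈ P ×ˢ P | p.2 - p.1 ∈ S} := by
  have hPB : ∀ y ∈ P, y +ᵥ K ⊆ ball x (R + ρ) := fun y hy => by
    refine (Set.vadd_set_mono hKρ).trans ?_
    rw [vadd_ball_zero]
    exact ball_subset_ball' (by linarith [mem_ball.1 (hP hy)])
  have h := card_sq_mul_measure_le volume hK hKfin hKS measurableSet_ball hPB
  rw [Measure.addHaar_ball_center] at h
  simpa using ENNReal.toReal_mono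
    (ENNReal.mul_ne_top measure_ball_lt_top.ne (ENNReal.natCast_ne_top _)) h


namespace UnifDisc

variable {Γ : Set E}

theorem exists_ncard_inter_ball_le (hΓ : UnifDisc Γ) :
    ∃ r > 0, ∀ (x : E) (R : ℝ), ((Γ ∩ ball x R).ncard : ℝ)
      ≤ (volume (ball (0 : E) (R + r))).toReal / (volume (ball (0 : E) r)).toReal := by
  classical
  obtain ⟨r, hr, hsub⟩ := id hΓ
  refine ⟨r / 2, half_pos hr, fun x R => ?_⟩
  have hfin := hΓ.finite_inter (isBounded_ball (x := x) (r := R))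
  set P := hfin.toFinset with hPdef
  have hP : ↑P ⊆ ball x R := by rw [hfin.coe_toFinset]; exact Set.inter_subset_right
  -- Points of `Γ` closer than `r` coincide, so only diagonal pairs have difference in `ball 0 r`.
  have hdiag : #{p ∈ P ×ˢ P | p.2 - p.1 ∈ ball (0 : E) r} ≤ #P := by
    rw [← P.diag_card]
    refine Finset.card_le_card fun p hp => ?_
    obtain ⟨hpP, hpr⟩ := Finset.mem_filter.1 hp
    obtain ⟨h1, h2⟩ := Finset.mem_product.1 hpP
    refine Finset.mem_diag.2 ⟨h1, hsub p.1
      ⟨(hfin.mem_toFinset.1 h1).1, mem_closedBall_self hr.le⟩ ⟨(hfin.mem_toFinset.1 h2).1, ?_⟩⟩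
    rw [mem_closedBall, dist_eq_norm]
    exact (mem_ball_zero_iff.1 hpr).le
  have hKS : ball (0 : E) (r / 2) - ball 0 (r / 2) ⊆ ball 0 r := by
    rw [ball_sub_ball (half_pos hr) (half_pos hr), sub_zero, add_halves]
  have hcount := card_sq_mul_le_of_subset_ball hP measurableSet_ball
    measure_ball_lt_top.ne hKS subset_rfl
  rw [Set.ncard_eq_toFinset_card _ hfin, ← hPdef,
    le_div_iff₀ (toReal_measure_ball_pos 0 (half_pos hr))]
  rcases (#P).eq_zero_or_pos with h0 | h0
  · simp [h0]
  refine le_of_mul_le_mul_left ?_ (Nat.cast_pos.2 h0 : (0 : ℝ) < #P)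
  calc (#P : ℝ) * (#P * (volume (ball (0 : E) (r / 2))).toReal)
      = (#P : ℝ) ^ 2 * (volume (ball (0 : E) (r / 2))).toReal := by ring
    _ ≤ (volume (ball (0 : E) (R + r / 2))).toReal * #P :=
      hcount.trans (by gcongr)
    _ = _ := mul_comm _ _

theorem exists_forall_ncard_div_le (hΓ : UnifDisc Γ) :
    ∃ r > 0, ∀ (x : E) (R : ℝ), ((Γ ∩ ball x R).ncard : ℝ) / (volume (ball x R)).toReal
      ≤ (volume (ball (0 : E) (R + r))).toReal / (volume (ball (0 : E) R)).toReal
        / (volume (ball (0 : E) r)).toReal := by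
  obtain ⟨r, hr, hcount⟩ := hΓ.exists_ncard_inter_ball_le
  refine ⟨r, hr, fun x R => ?_⟩
  rw [Measure.addHaar_ball_center, div_right_comm]
  exact div_le_div_of_nonneg_right (hcount x R) ENNReal.toReal_nonneg

theorem ncard_div_le_densR (hΓ : UnifDisc Γ) (x : E) (R : ℝ) :
    ((Γ ∩ ball x R).ncard : ℝ) / (volume (ball x R)).toReal ≤ densR Γ R :=
  let ⟨_, _, h⟩ := hΓ.exists_forall_ncard_div_le
  le_ciSup ⟨_, Set.forall_mem_range.2 fun y => h y R⟩ x

theorem isBoundedUnder_densR (hΓ : UnifDisc Γ) : IsBoundedUnder (· ≤ ·) atTop (densR Γ) := by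
  obtain ⟨r, -, h⟩ := hΓ.exists_forall_ncard_div_le
  refine ((tendsto_measure_ball_add_div_measure_ball r).div_const _).isBoundedUnder_le.mono_le
    (Eventually.of_forall fun R => Real.iSup_le (fun x => h x R) (by positivity))

theorem upDens_nonneg (hΓ : UnifDisc Γ) : 0 ≤ upDens Γ :=
  le_limsup_of_frequently_le (Frequently.of_forall (densR_nonneg Γ)) hΓ.isBoundedUnder_densR

variable {K S : Set E} {ρ : ℝ} {F : Finset E}

theorem ncard_sq_mul_le (hΓ : UnifDisc Γ) (hK : MeasurableSet K) (hKfin : volume K ≠ ∞)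
    (hKS : K - K ⊆ S) (hKρ : K ⊆ ball 0 ρ) (hF : (Γ - Γ) ∩ S ⊆ F) (x : E) (R : ℝ) :
    ((Γ ∩ ball x R).ncard : ℝ) ^ 2 * (volume K).toReal
      ≤ (volume (ball (0 : E) (R + ρ))).toReal
        * ∑ u ∈ F, (({y ∈ Γ | y + u ∈ Γ} ∩ ball x R).ncard : ℝ) := by
  classical
  have hfin := hΓ.finite_inter (isBounded_ball (x := x) (r := R))
  set P := hfin.toFinset with hPdef
  have hmem : ∀ y ∈ P, y ∈ Γ ∧ y ∈ ball x R := fun y hy => hfin.mem_toFinset.1 hy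
  have hP : ↑P ⊆ ball x R := fun y hy => (hmem y hy).2
  have hpairs : #{p ∈ P ×ˢ P | p.2 - p.1 ∈ S}
      ≤ ∑ u ∈ F, ({y ∈ Γ | y + u ∈ Γ} ∩ ball x R).ncard := by
    rw [Finset.card_eq_sum_card_fiberwise (f := fun p => p.2 - p.1) (t := F)]
    · gcongr with u
      rw [← Set.ncard_coe_finset]
      refine Set.ncard_le_ncard_of_injOn Prod.fst (fun p hp => ?_) (fun p hp q hq hpq => ?_)
        (hfin.subset fun y hy => ⟨hy.1.1, hy.2⟩)
      · simp only [Finset.mem_coe, Finset.mem_filter, Finset.mem_product] at hp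
        obtain ⟨⟨⟨h1, h2⟩, -⟩, rfl⟩ := hp
        exact ⟨⟨(hmem _ h1).1, by simpa using (hmem _ h2).1⟩, (hmem _ h1).2⟩
      · simp only [Finset.mem_coe, Finset.mem_filter] at hp hq
        exact Prod.ext hpq (by rw [← sub_add_cancel p.2 p.1, hp.2, hpq, ← hq.2, sub_add_cancel])
    · intro p hp
      simp only [Finset.mem_coe, Finset.mem_filter, Finset.mem_product] at hp
      exact hF ⟨Set.sub_mem_sub (hmem _ hp.1.2).1 (hmem _ hp.1.1).1, hp.2⟩
  rw [Set.ncard_eq_toFinset_card _ hfin, ← hPdef]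
  calc (#P : ℝ) ^ 2 * (volume K).toReal
      ≤ (volume (ball (0 : E) (R + ρ))).toReal * #{p ∈ P ×ˢ P | p.2 - p.1 ∈ S} :=
        card_sq_mul_le_of_subset_ball hP hK hKfin hKS hKρ
    _ ≤ _ := by gcongr; exact_mod_cast hpairs

theorem sq_densR_mul_le (hΓ : UnifDisc Γ) (hK : MeasurableSet K) (hKfin : volume K ≠ ∞)
    (hKS : K - K ⊆ S) (hKρ : K ⊆ ball 0 ρ) (hF : (Γ - Γ) ∩ S ⊆ F) {R : ℝ}
    (hR : 0 < R) :
    densR Γ R ^ 2 * (volume K).toReal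
      ≤ (volume (ball (0 : E) (R + ρ))).toReal / (volume (ball (0 : E) R)).toReal
        * ∑ u ∈ F, densR {y ∈ Γ | y + u ∈ Γ} R := by
  set vR := (volume (ball (0 : E) R)).toReal
  have hvR : 0 < vR := toReal_measure_ball_pos 0 hR
  have hdens : ∀ x u, (({y ∈ Γ | y + u ∈ Γ} ∩ ball x R).ncard : ℝ)
      ≤ vR * densR {y ∈ Γ | y + u ∈ Γ} R := fun x u => by
    have h := (hΓ.mono (Set.sep_subset Γ (· + u ∈ Γ))).ncard_div_le_densR x R
    rwa [Measure.addHaar_ball_center, div_le_iff₀ hvR, mul_comm] at h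
  rw [densR, Real.iSup_pow (fun x => by positivity), Real.iSup_mul_of_nonneg ENNReal.toReal_nonneg]
  refine Real.iSup_le (fun x => ?_) ?_
  · rw [Measure.addHaar_ball_center]
    calc (((Γ ∩ ball x R).ncard : ℝ) / vR) ^ 2 * (volume K).toReal
        = ((Γ ∩ ball x R).ncard : ℝ) ^ 2 * (volume K).toReal / vR ^ 2 := by ring
      _ ≤ (volume (ball (0 : E) (R + ρ))).toReal
            * (∑ u ∈ F, vR * densR {y ∈ Γ | y + u ∈ Γ} R) / vR ^ 2 := by
        refine div_le_div_of_nonneg_right ?_ (by positivity)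
        exact (hΓ.ncard_sq_mul_le hK hKfin hKS hKρ hF x R).trans
          (by gcongr with u; exact hdens x u)
      _ = _ := by rw [← Finset.mul_sum]; field_simp
  · exact mul_nonneg (div_nonneg ENNReal.toReal_nonneg hvR.le)
      (Finset.sum_nonneg fun u _ => densR_nonneg _ R)

end UnifDisc

end Haar

theorem minkowski_meyer_general {n : ℕ} (Γ : Set (EuclideanSpace ℝ (Fin n)))
    (hΓ : Meyer Γ)
    (S : Set (EuclideanSpace ℝ (Fin n)))
    (hSconv : Convex ℝ S) (hScomp : IsCompact S)
    (hSsymm : S = -S) :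
    upDens Γ * (volume ((2 : ℝ)⁻¹ • S)).toReal ≤ ∑' u : S, freq Γ (u : EuclideanSpace ℝ (Fin n)) := by
  obtain ⟨⟨hΓU, -⟩, hΔU, -⟩ := hΓ
  have hKcomp : IsCompact ((2 : ℝ)⁻¹ • S) := hScomp.smul _
  obtain ⟨ρ, -, hKρ⟩ := hKcomp.isBounded.subset_ball_lt 0 0
  have hFfin := hΔU.finite_inter hScomp.isBounded
  rw [tsum_freq_eq_sum hFfin.coe_toFinset]
  rcases hΓU.upDens_nonneg.eq_or_lt with hD | hD
  · simp [← hD]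
  rw [le_div_iff₀ hD, mul_right_comm, ← sq]
  refine sq_limsup_mul_le_sum_limsup ENNReal.toReal_nonneg hD
    (isCoboundedUnder_le_of_le atTop (densR_nonneg Γ))
    (fun u _ => (hΓU.mono (Set.sep_subset Γ (· + u ∈ Γ))).isBoundedUnder_densR)
    (fun u R => densR_nonneg _ R)
    (tendsto_measure_ball_add_div_measure_ball (E := EuclideanSpace ℝ (Fin n)) ρ) ?_
  filter_upwards [eventually_gt_atTop 0] with R hR
  exact hΓU.sq_densR_mul_le hKcomp.isClosed.measurableSet hKcomp.measure_lt_top.ne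
    (hSconv.inv_two_smul_sub_inv_two_smul hSsymm).le hKρ hFfin.coe_toFinset.symm.le hR

/-- Minkowski theorem for Meyer sets:
∑_{u∈S} ρ_Γ(u) ≥ D⁺(Γ)·Vol(S/2). -/
theorem minkowski_meyer {n : ℕ} (Γ : Set (EuclideanSpace ℝ (Fin n)))
    (hΓ : Meyer Γ)
    (S : Set (EuclideanSpace ℝ (Fin n)))
    (hSconv : Convex ℝ S) (hScomp : IsCompact S) (hSint : (interior S).Nonempty)
    (hSsymm : S = -S) :
    upDens Γ * (volume ((2 : ℝ)⁻¹ • S)).toReal ≤ ∑' u : S, freq Γ (u : EuclideanSpace ℝ (Fin n)) :=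
  minkowski_meyer_general Γ hΓ S hSconv hScomp hSsymm
end

section
/- A weakly almost periodic set Γ ⊂ ℝⁿ possesses a uniform density D(Γ): for every ε > 0 there exists R_ε > 0 such that for every R > R_ε and every x ∈ ℝⁿ, |#(B(x,R)∩Γ)/Vol(B(x,R)) − D(Γ)| < ε. In particular D(Γ) = D⁺(Γ), and for every x ∈ ℝⁿ, D(Γ) = lim_{R→∞} #(B(x,R)∩Γ)/Vol(B(x,R)). -/
open Filter MeasureTheory Metric Pointwise
open scoped ENNReal symmDiff

variable {E : Type*} [NormedAddCommGroup E] [MeasureSpace E]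

/- ### Auxiliary lemmas -/

lemma finite_inter_ball' [ProperSpace E] {Γ : Set E} (hU : UnifDisc Γ) (x : E) (R : ℝ) :
    (Γ ∩ ball x R).Finite := by
  obtain ⟨r, hr, hsub⟩ := hU
  have hcov : closedBall x R ⊆ ⋃ y ∈ closedBall x R, ball y r := fun z hz =>
    Set.mem_biUnion hz (mem_ball_self hr)
  obtain ⟨t, hts, htfin, htcov⟩ := (isCompact_closedBall x R).elim_finite_subcover_image
    (fun y _ => isOpen_ball) hcov
  have : Γ ∩ ball x R ⊆ ⋃ y ∈ t, Γ ∩ closedBall y r := by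
    intro z ⟨hzΓ, hzb⟩
    have := htcov (ball_subset_closedBall hzb)
    simp only [Set.mem_iUnion] at this ⊢
    obtain ⟨y, hy, hzy⟩ := this
    exact ⟨y, hy, hzΓ, ball_subset_closedBall hzy⟩
  exact Set.Finite.subset (Set.Finite.biUnion htfin
    (fun y _ => Set.Subsingleton.finite (hsub y))) this

lemma abs_ncard_diff_le' {α : Type*} {A B : Set α} (hA : A.Finite) (hB : B.Finite) :
    |(A.ncard : ℝ) - B.ncard| ≤ ((symmDiff A B).ncard : ℝ) := by
  have hs : (symmDiff A B).Finite := (hA.union hB).subset Set.symmDiff_subset_union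
  have h1 : A.ncard ≤ B.ncard + (symmDiff A B).ncard := by
    calc A.ncard ≤ (B ∪ symmDiff A B).ncard := by
          refine Set.ncard_le_ncard (fun z hz => ?_) (hB.union hs)
          by_cases hzB : z ∈ B
          · exact Or.inl hzB
          · exact Or.inr (Or.inl ⟨hz, hzB⟩)
      _ ≤ B.ncard + (symmDiff A B).ncard := Set.ncard_union_le _ _
  have h2 : B.ncard ≤ A.ncard + (symmDiff A B).ncard := by
    calc B.ncard ≤ (A ∪ symmDiff A B).ncard := by
          refine Set.ncard_le_ncard (fun z hz => ?_) (hA.union hs)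
          by_cases hzA : z ∈ A
          · exact Or.inl hzA
          · exact Or.inr (Or.inr ⟨hz, hzA⟩)
      _ ≤ A.ncard + (symmDiff A B).ncard := Set.ncard_union_le _ _
  have h1' : (A.ncard : ℝ) ≤ B.ncard + (symmDiff A B).ncard := by exact_mod_cast h1
  have h2' : (B.ncard : ℝ) ≤ A.ncard + (symmDiff A B).ncard := by exact_mod_cast h2
  rw [abs_le]; constructor <;> linarith

/-- From weak almost periodicity: counts at a fixed radius are uniform up to `ε · Vol`. -/
lemma wap_count [ProperSpace E] {Γ : Set E} (hΓ : WAP Γ) {ε : ℝ} (hε : 0 < ε) :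
    ∃ R₀ > 0, ∀ x y : E,
      |((Γ ∩ ball x R₀).ncard : ℝ) - ((Γ ∩ ball y R₀).ncard : ℝ)|
        ≤ ε * (volume (ball (0 : E) R₀)).toReal := by
  obtain ⟨R, hR, h⟩ := hΓ.2 ε hε
  refine ⟨R, hR, fun x y => ?_⟩
  obtain ⟨v, hv⟩ := h x y
  have hU : UnifDisc Γ := hΓ.1.1
  have hA : (Γ ∩ ball x R).Finite := finite_inter_ball' hU x R
  have hB : ((fun z => z - v) '' (Γ ∩ ball y R)).Finite :=
    (finite_inter_ball' hU y R).image _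
  have hcard : ((fun z => z - v) '' (Γ ∩ ball y R)).ncard = (Γ ∩ ball y R).ncard :=
    Set.ncard_image_of_injective _ (fun a b hab => by
      simpa using sub_left_injective hab)
  calc |((Γ ∩ ball x R).ncard : ℝ) - ((Γ ∩ ball y R).ncard : ℝ)|
      = |((Γ ∩ ball x R).ncard : ℝ) - (((fun z => z - v) '' (Γ ∩ ball y R)).ncard : ℝ)| := by
        rw [hcard]
    _ ≤ ((symmDiff (Γ ∩ ball x R) ((fun z => z - v) '' (Γ ∩ ball y R))).ncard : ℝ) :=
        abs_ncard_diff_le' hA hB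
    _ ≤ ε * (volume (ball (0 : E) R)).toReal := hv

lemma vol_ball_eq' {n : ℕ} (r : ℝ) (hr : 0 < r) :
    volume (ball (0 : EuclideanSpace ℝ (Fin n)) r)
      = ENNReal.ofReal (r ^ n) * volume (ball (0 : EuclideanSpace ℝ (Fin n)) 1) := by
  rcases Nat.eq_zero_or_pos n with hn | hn
  · subst hn
    have hs : ∀ y : EuclideanSpace ℝ (Fin 0), y = 0 := fun y => Subsingleton.elim y 0
    have h1 : ball (0 : EuclideanSpace ℝ (Fin 0)) r = Set.univ := by
      ext y; simp [mem_ball, hs y, hr]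
    have h2 : ball (0 : EuclideanSpace ℝ (Fin 0)) 1 = Set.univ := by
      ext y; simp [mem_ball, hs y]
    simp [h1, h2]
  · haveI : Nonempty (Fin n) := ⟨⟨0, hn⟩⟩
    haveI : Nontrivial (EuclideanSpace ℝ (Fin n)) := inferInstance
    rw [Measure.addHaar_ball _ _ hr.le, finrank_euclideanSpace_fin]

lemma key' {n : ℕ} {Γ : Set (EuclideanSpace ℝ (Fin n))} (hU : UnifDisc Γ)
    {R₀ R : ℝ} (h₀ : 0 < R₀) (x : EuclideanSpace ℝ (Fin n)) {m M : ℝ≥0∞}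
    (hm : ∀ y, m ≤ ((Γ ∩ ball y R₀).ncard : ℝ≥0∞))
    (hM : ∀ y, ((Γ ∩ ball y R₀).ncard : ℝ≥0∞) ≤ M) :
    ((Γ ∩ ball x (R - R₀)).ncard : ℝ≥0∞) * volume (ball (0 : EuclideanSpace ℝ (Fin n)) R₀)
        ≤ M * volume (ball x R)
    ∧ m * volume (ball x R)
        ≤ ((Γ ∩ ball x (R + R₀)).ncard : ℝ≥0∞)
            * volume (ball (0 : EuclideanSpace ℝ (Fin n)) R₀) := by
  classical
  set S := ball x R with hS
  have hFin : (Γ ∩ ball x (R + R₀)).Finite := finite_inter_ball' hU x (R + R₀)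
  set F : Finset (EuclideanSpace ℝ (Fin n)) := hFin.toFinset with hF
  have hFmem : ∀ p, p ∈ F ↔ p ∈ Γ ∧ p ∈ ball x (R + R₀) := by
    intro p; simp [hF, Set.Finite.mem_toFinset]
  set f : EuclideanSpace ℝ (Fin n) → ℝ≥0∞ :=
    fun y => ∑ p ∈ F, (ball p R₀).indicator 1 y with hf
  have hfmeas : Measurable f := by
    apply Finset.measurable_sum
    intro p _
    exact Measurable.indicator measurable_one measurableSet_ball
  have step1 : ∑ p ∈ F, volume (ball p R₀ ∩ S) = ∫⁻ y in S, f y := by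
    rw [lintegral_finset_sum _ (fun p _ =>
      Measurable.indicator measurable_one measurableSet_ball)]
    congr 1
    ext p
    rw [lintegral_indicator_one measurableSet_ball, Measure.restrict_apply measurableSet_ball]
  have step2 : ∀ y ∈ S, f y = ((Γ ∩ ball y R₀).ncard : ℝ≥0∞) := by
    intro y hy
    have hset : Γ ∩ ball y R₀ = ↑(F.filter (fun p => y ∈ ball p R₀)) := by
      ext p
      simp only [Finset.coe_filter, Set.mem_setOf_eq, hFmem, Set.mem_inter_iff]
      constructor
      · rintro ⟨hpΓ, hpb⟩
        refine ⟨⟨hpΓ, ?_⟩, by rwa [mem_ball, dist_comm]⟩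
        rw [mem_ball] at *
        calc dist p x ≤ dist p y + dist y x := dist_triangle _ _ _
          _ < R₀ + R := add_lt_add hpb hy
          _ = R + R₀ := add_comm _ _
      · rintro ⟨⟨hpΓ, _⟩, hyp⟩
        exact ⟨hpΓ, by rwa [mem_ball, dist_comm]⟩
    rw [hset, Set.ncard_coe_finset, hf]
    simp only [Set.indicator_apply, Pi.one_apply]
    rw [Finset.sum_boole]
  have hmeasS : MeasurableSet S := measurableSet_ball
  have step3u : ∫⁻ y in S, f y ≤ M * volume S := by
    calc ∫⁻ y in S, f y ≤ ∫⁻ _ in S, M := by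
          refine setLIntegral_mono measurable_const (fun y hy => ?_)
          rw [step2 y hy]; exact hM y
      _ = M * volume S := setLIntegral_const _ _
  have step3l : m * volume S ≤ ∫⁻ y in S, f y := by
    calc m * volume S = ∫⁻ _ in S, m := (setLIntegral_const _ _).symm
      _ ≤ ∫⁻ y in S, f y := by
          refine setLIntegral_mono hfmeas (fun y hy => ?_)
          rw [step2 y hy]; exact hm y
  have hvol : ∀ p : EuclideanSpace ℝ (Fin n),
      volume (ball p R₀) = volume (ball (0 : EuclideanSpace ℝ (Fin n)) R₀) := fun p =>
    Measure.addHaar_ball_center volume p R₀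
  have step4 : ∑ p ∈ F, volume (ball p R₀ ∩ S)
      ≤ ((Γ ∩ ball x (R + R₀)).ncard : ℝ≥0∞)
          * volume (ball (0 : EuclideanSpace ℝ (Fin n)) R₀) := by
    calc ∑ p ∈ F, volume (ball p R₀ ∩ S)
        ≤ ∑ _p ∈ F, volume (ball (0 : EuclideanSpace ℝ (Fin n)) R₀) := by
          refine Finset.sum_le_sum (fun p _ => ?_)
          rw [← hvol p]
          exact measure_mono Set.inter_subset_left
      _ = F.card * volume (ball (0 : EuclideanSpace ℝ (Fin n)) R₀) := by
          rw [Finset.sum_const, nsmul_eq_mul]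
      _ = _ := by rw [Set.ncard_eq_toFinset_card _ hFin]
  have hFin' : (Γ ∩ ball x (R - R₀)).Finite := finite_inter_ball' hU x (R - R₀)
  set F' : Finset (EuclideanSpace ℝ (Fin n)) := hFin'.toFinset with hF'
  have hsub : F' ⊆ F := by
    intro p hp
    rw [hF', Set.Finite.mem_toFinset] at hp
    rw [hFmem]
    exact ⟨hp.1, ball_subset_ball (by linarith) hp.2⟩
  have step5 : ((Γ ∩ ball x (R - R₀)).ncard : ℝ≥0∞)
        * volume (ball (0 : EuclideanSpace ℝ (Fin n)) R₀)
      ≤ ∑ p ∈ F, volume (ball p R₀ ∩ S) := by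
    have hballsub : ∀ p ∈ F', ball p R₀ ∩ S = ball p R₀ := by
      intro p hp
      rw [hF', Set.Finite.mem_toFinset] at hp
      refine Set.inter_eq_left.2 ?_
      have h2 : dist p x < R - R₀ := hp.2
      exact ball_subset_ball' (by rw [dist_comm] at h2 ⊢; linarith)
    calc ((Γ ∩ ball x (R - R₀)).ncard : ℝ≥0∞)
          * volume (ball (0 : EuclideanSpace ℝ (Fin n)) R₀)
        = ∑ p ∈ F', volume (ball p R₀ ∩ S) := by
          rw [Set.ncard_eq_toFinset_card _ hFin']
          rw [Finset.sum_congr rfl (fun p hp => by rw [hballsub p hp, hvol p])]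
          rw [Finset.sum_const, nsmul_eq_mul]
      _ ≤ ∑ p ∈ F, volume (ball p R₀ ∩ S) := Finset.sum_le_sum_of_subset hsub
  exact ⟨le_trans (le_trans step5 (le_of_eq step1)) step3u,
    le_trans step3l (le_trans (le_of_eq step1.symm) step4)⟩

/-- a weakly almost periodic set has a uniform density D(Γ), which
equals its uniform upper density, and is the limit of the density of patches
around any point. -/
theorem wap_uniform_density {n : ℕ} (Γ : Set (EuclideanSpace ℝ (Fin n)))
    (hΓ : WAP Γ) :
    ∃ D : ℝ,
      (∀ ε > 0, ∃ Rε > 0, ∀ R > Rε, ∀ x : EuclideanSpace ℝ (Fin n),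
        |((Γ ∩ ball x R).ncard : ℝ) / (volume (ball x R)).toReal - D| < ε) ∧
      D = upDens Γ ∧
      ∀ x : EuclideanSpace ℝ (Fin n),
        Tendsto (fun R : ℝ => ((Γ ∩ ball x R).ncard : ℝ) / (volume (ball x R)).toReal)
          atTop (nhds D) := by
  have hU : UnifDisc Γ := hΓ.1.1
  let V : ℝ → ℝ := fun S => (volume (ball (0 : EuclideanSpace ℝ (Fin n)) S)).toReal
  have hVx : ∀ (x : EuclideanSpace ℝ (Fin n)) (S : ℝ),
      (volume (ball x S)).toReal = V S := fun x S => by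
    show _ = (volume (ball (0 : EuclideanSpace ℝ (Fin n)) S)).toReal
    rw [Measure.addHaar_ball_center]
  have hVpos : ∀ S : ℝ, 0 < S → 0 < V S := fun S hS =>
    ENNReal.toReal_pos (measure_ball_pos _ _ hS).ne' measure_ball_lt_top.ne
  have hVnn : ∀ S : ℝ, 0 ≤ V S := fun S => ENNReal.toReal_nonneg
  let d : EuclideanSpace ℝ (Fin n) → ℝ → ℝ :=
    fun x S => ((Γ ∩ ball x S).ncard : ℝ) / (volume (ball x S)).toReal
  -- volume of balls as powers
  have hVform : ∀ t : ℝ, 0 < t → V t = t ^ n * V 1 := by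
    intro t ht
    show (volume (ball (0 : EuclideanSpace ℝ (Fin n)) t)).toReal = _
    rw [vol_ball_eq' t ht, ENNReal.toReal_mul, ENNReal.toReal_ofReal (by positivity)]
  have hV1 : 0 < V 1 := hVpos 1 one_pos
  -- Phase Φ : for each ε we get an approximate uniform density c
  have Phi : ∀ ε : ℝ, 0 < ε → ∃ c : ℝ, 0 ≤ c ∧ ∃ S₀ : ℝ, 0 < S₀ ∧
      ∀ S ≥ S₀, ∀ x, |d x S - c| ≤ 2 * ε := by
    intro ε hε
    obtain ⟨R₀, hR₀, hcnt⟩ := wap_count hΓ hε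
    have hV₀ : 0 < V R₀ := hVpos _ hR₀
    set c : ℝ := ((Γ ∩ ball (0 : EuclideanSpace ℝ (Fin n)) R₀).ncard : ℝ) / V R₀ with hc
    have hc0 : 0 ≤ c := div_nonneg (Nat.cast_nonneg _) hV₀.le
    have hcV : c * V R₀ = ((Γ ∩ ball (0 : EuclideanSpace ℝ (Fin n)) R₀).ncard : ℝ) :=
      div_mul_cancel₀ _ hV₀.ne'
    have hub : ∀ y, ((Γ ∩ ball y R₀).ncard : ℝ) ≤ (c + ε) * V R₀ := by
      intro y
      have h := abs_le.1 (hcnt y 0)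
      nlinarith [h.2]
    have hlb : ∀ y, (c - ε) * V R₀ ≤ ((Γ ∩ ball y R₀).ncard : ℝ) := by
      intro y
      have h := abs_le.1 (hcnt y 0)
      nlinarith [h.1]
    have hMε : ∀ y, ((Γ ∩ ball y R₀).ncard : ℝ≥0∞) ≤ ENNReal.ofReal ((c + ε) * V R₀) := by
      intro y
      rw [← ENNReal.ofReal_natCast]
      exact ENNReal.ofReal_le_ofReal (hub y)
    have hmε : ∀ y, ENNReal.ofReal ((c - ε) * V R₀) ≤ ((Γ ∩ ball y R₀).ncard : ℝ≥0∞) := by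
      intro y
      rw [← ENNReal.ofReal_natCast]
      exact ENNReal.ofReal_le_ofReal (hlb y)
    -- upper bound on the count in a ball of radius S
    have hup : ∀ S : ℝ, ∀ x, ((Γ ∩ ball x S).ncard : ℝ) * V R₀
        ≤ ((c + ε) * V R₀) * V (S + R₀) := by
      intro S x
      have h := (key' hU (R := S + R₀) hR₀ x hmε hMε).1
      rw [add_sub_cancel_right] at h
      have h2 := ENNReal.toReal_mono
        (ENNReal.mul_ne_top ENNReal.ofReal_ne_top measure_ball_lt_top.ne) h
      rw [ENNReal.toReal_mul, ENNReal.toReal_mul, ENNReal.toReal_natCast,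
        ENNReal.toReal_ofReal (mul_nonneg (by linarith) hV₀.le)] at h2
      simp only [hVx] at h2
      exact h2
    -- lower bound on the count
    have hlow : ∀ S : ℝ, ∀ x, ((c - ε) * V R₀) * V (S - R₀)
        ≤ ((Γ ∩ ball x S).ncard : ℝ) * V R₀ := by
      intro S x
      have h := (key' hU (R := S - R₀) hR₀ x hmε hMε).2
      rw [sub_add_cancel] at h
      have hfin : ((Γ ∩ ball x S).ncard : ℝ≥0∞)
          * volume (ball (0 : EuclideanSpace ℝ (Fin n)) R₀) ≠ ⊤ :=
        ENNReal.mul_ne_top (ENNReal.natCast_ne_top _) measure_ball_lt_top.ne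
      have h2 := ENNReal.toReal_mono hfin h
      rw [ENNReal.toReal_mul, ENNReal.toReal_mul, ENNReal.toReal_natCast] at h2
      simp only [hVx] at h2
      refine le_trans ?_ h2
      have h3 : (c - ε) * V R₀ ≤ (ENNReal.ofReal ((c - ε) * V R₀)).toReal := by
        rw [ENNReal.toReal_ofReal']
        exact le_max_left _ _
      exact mul_le_mul_of_nonneg_right h3 (hVnn _)
    -- divide the count bounds by V R₀
    have hupN : ∀ S : ℝ, ∀ x, ((Γ ∩ ball x S).ncard : ℝ) ≤ (c + ε) * V (S + R₀) := by
      intro S x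
      have h' : ((Γ ∩ ball x S).ncard : ℝ) * V R₀ ≤ ((c + ε) * V (S + R₀)) * V R₀ :=
        le_trans (hup S x) (le_of_eq (by ring))
      exact le_of_mul_le_mul_right h' hV₀
    have hlowN : ∀ S : ℝ, ∀ x, (c - ε) * V (S - R₀) ≤ ((Γ ∩ ball x S).ncard : ℝ) := by
      intro S x
      have h' : ((c - ε) * V (S - R₀)) * V R₀ ≤ ((Γ ∩ ball x S).ncard : ℝ) * V R₀ :=
        le_trans (le_of_eq (by ring)) (hlow S x)
      exact le_of_mul_le_mul_right h' hV₀
    -- limits of volume ratios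
    have hinv : Tendsto (fun S : ℝ => R₀ / S) atTop (nhds 0) := by
      simpa [div_eq_mul_inv] using tendsto_inv_atTop_zero.const_mul R₀
    have hplus : Tendsto (fun S : ℝ => (1 + R₀ / S) ^ n) atTop (nhds 1) := by
      have h1 := ((tendsto_const_nhds (x := (1:ℝ)) (f := (atTop : Filter ℝ))).add hinv).pow n
      simpa using h1
    have hminus : Tendsto (fun S : ℝ => (1 - R₀ / S) ^ n) atTop (nhds 1) := by
      have h1 := ((tendsto_const_nhds (x := (1:ℝ)) (f := (atTop : Filter ℝ))).sub hinv).pow n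
      simpa using h1
    set δ : ℝ := ε / (c + ε + 1) with hδ
    have hδpos : 0 < δ := div_pos hε (by linarith)
    have hδe : δ * (c + ε + 1) = ε := div_mul_cancel₀ _ (ne_of_gt (by linarith))
    have e1 : ∀ᶠ S : ℝ in atTop, (1 + R₀ / S) ^ n < 1 + δ :=
      hplus.eventually_lt_const (by linarith)
    have e2 : ∀ᶠ S : ℝ in atTop, 1 - δ < (1 - R₀ / S) ^ n :=
      hminus.eventually_const_lt (by linarith)
    have e3 : ∀ᶠ S : ℝ in atTop, (1 - R₀ / S) ^ n < 1 + δ :=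
      hminus.eventually_lt_const (by linarith)
    have e4 : ∀ᶠ S : ℝ in atTop, S ≥ R₀ + 1 := eventually_ge_atTop _
    obtain ⟨S₀, hS₀⟩ := eventually_atTop.1 (e1.and (e2.and (e3.and e4)))
    refine ⟨c, hc0, max S₀ 1, lt_of_lt_of_le one_pos (le_max_right _ _), ?_⟩
    intro S hS x
    obtain ⟨p1, p2, p3, p4⟩ := hS₀ S (le_trans (le_max_left _ _) hS)
    have hSpos : 0 < S := lt_of_lt_of_le one_pos (le_trans (le_max_right _ _) hS)
    have hSR : R₀ < S := by linarith
    have hVS : 0 < V S := hVpos S hSpos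
    have hratp : V (S + R₀) / V S = (1 + R₀ / S) ^ n := by
      rw [hVform _ (by linarith), hVform _ hSpos,
        mul_comm ((S + R₀) ^ n) (V 1), mul_comm (S ^ n) (V 1),
        mul_div_mul_left _ _ (ne_of_gt hV1)]
      rw [show (1 + R₀ / S) = (S + R₀) / S by field_simp, div_pow]
    have hratm : V (S - R₀) / V S = (1 - R₀ / S) ^ n := by
      rw [hVform _ (by linarith), hVform _ hSpos,
        mul_comm ((S - R₀) ^ n) (V 1), mul_comm (S ^ n) (V 1),
        mul_div_mul_left _ _ (ne_of_gt hV1)]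
      rw [show (1 - R₀ / S) = (S - R₀) / S by field_simp, div_pow]
    have hdx : d x S = ((Γ ∩ ball x S).ncard : ℝ) / V S := by
      show _ / _ = _
      rw [hVx]
    have hup2 : d x S ≤ (c + ε) * ((1 + R₀ / S) ^ n) := by
      rw [hdx, div_le_iff₀ hVS]
      calc ((Γ ∩ ball x S).ncard : ℝ) ≤ (c + ε) * V (S + R₀) := hupN S x
        _ = (c + ε) * (V (S + R₀) / V S) * V S := by
            rw [mul_assoc, div_mul_cancel₀ _ hVS.ne']
        _ = (c + ε) * (1 + R₀ / S) ^ n * V S := by rw [hratp]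
    have hlow2 : (c - ε) * ((1 - R₀ / S) ^ n) ≤ d x S := by
      rw [hdx, le_div_iff₀ hVS]
      calc (c - ε) * (1 - R₀ / S) ^ n * V S
          = (c - ε) * (V (S - R₀) / V S) * V S := by rw [hratm]
        _ = (c - ε) * V (S - R₀) := by
            rw [mul_assoc, div_mul_cancel₀ _ hVS.ne']
        _ ≤ _ := hlowN S x
    have hδe' : δ * c + δ * ε + δ = ε := by linear_combination hδe
    have hδc : 0 ≤ δ * c := mul_nonneg hδpos.le hc0
    have hδε : 0 ≤ δ * ε := mul_nonneg hδpos.le hε.le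
    rw [abs_le]
    constructor
    · -- c - 2ε ≤ d x S
      rcases le_or_gt ε c with hce | hce
      · have h4 : (c - ε) * (1 - δ) ≤ (c - ε) * ((1 - R₀ / S) ^ n) :=
          mul_le_mul_of_nonneg_left p2.le (by linarith)
        have h5 : (c - ε) * (1 - δ) = c - 2 * ε + 2 * (δ * ε) + δ := by
          linear_combination -hδe'
        linarith
      · have h4 : (c - ε) * (1 + δ) ≤ (c - ε) * ((1 - R₀ / S) ^ n) :=
          mul_le_mul_of_nonpos_left p3.le (by linarith)
        have h5 : (c - ε) * (1 + δ) = c - 2 * (δ * ε) - δ := by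
          linear_combination hδe'
        linarith
    · -- d x S ≤ c + 2ε
      have h4 : (c + ε) * ((1 + R₀ / S) ^ n) ≤ (c + ε) * (1 + δ) :=
        mul_le_mul_of_nonneg_left p1.le (by linarith)
      have h5 : (c + ε) * (1 + δ) = c + 2 * ε - δ := by
        linear_combination hδe'
      linarith
  -- Phase 2 : extract the limit density D
  have seq : ∀ k : ℕ, ∃ c : ℝ, 0 ≤ c ∧ ∃ S₀ : ℝ, 0 < S₀ ∧
      ∀ S ≥ S₀, ∀ x, |d x S - c| ≤ 2 * (1 / (k + 1 : ℝ)) :=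
    fun k => Phi _ (by positivity)
  choose a ha0 S₀f hS₀f hest using seq
  have hdiff : ∀ k l : ℕ, |a k - a l| ≤ 2 * (1 / (k + 1 : ℝ)) + 2 * (1 / (l + 1 : ℝ)) := by
    intro k l
    have h1 := hest k (max (S₀f k) (S₀f l)) (le_max_left _ _) 0
    have h2 := hest l (max (S₀f k) (S₀f l)) (le_max_right _ _) 0
    have h1' := abs_le.1 h1
    have h2' := abs_le.1 h2
    rw [abs_le]
    constructor <;> linarith
  have hb0 : Tendsto (fun k : ℕ => 4 * (1 / (k + 1 : ℝ))) atTop (nhds 0) := by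
    have := tendsto_one_div_add_atTop_nhds_zero_nat.const_mul (4 : ℝ)
    simpa using this
  have hcauchy : CauchySeq a := by
    refine cauchySeq_of_le_tendsto_0 (fun N : ℕ => 4 * (1 / (N + 1 : ℝ))) (fun k l N hk hl => ?_) hb0
    rw [Real.dist_eq]
    have hmono : ∀ i j : ℕ, j ≤ i → (1 / (i + 1 : ℝ)) ≤ 1 / (j + 1 : ℝ) := by
      intro i j hij
      apply one_div_le_one_div_of_le (by positivity)
      have : (j : ℝ) ≤ i := Nat.cast_le.2 hij
      linarith
    have := hdiff k l
    have hk' := hmono k N hk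
    have hl' := hmono l N hl
    linarith
  obtain ⟨D, hD⟩ := cauchySeq_tendsto_of_complete hcauchy
  -- Phase 3 : uniform approximation of d by D
  have Psi : ∀ ε : ℝ, 0 < ε → ∃ S₀ : ℝ, 0 < S₀ ∧ ∀ S ≥ S₀, ∀ x, |d x S - D| < ε := by
    intro ε hε
    have h1 : Tendsto (fun k : ℕ => 2 * (1 / (k + 1 : ℝ))) atTop (nhds 0) := by
      have := tendsto_one_div_add_atTop_nhds_zero_nat.const_mul (2 : ℝ)
      simpa using this
    have e1 : ∀ᶠ k : ℕ in atTop, 2 * (1 / (k + 1 : ℝ)) < ε / 3 :=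
      h1.eventually_lt_const (by linarith)
    have e2 : ∀ᶠ k : ℕ in atTop, |a k - D| < ε / 3 := by
      have := Metric.tendsto_atTop.1 hD (ε / 3) (by linarith)
      obtain ⟨N, hN⟩ := this
      refine eventually_atTop.2 ⟨N, fun k hk => ?_⟩
      have := hN k hk
      rwa [Real.dist_eq] at this
    obtain ⟨k, hk1, hk2⟩ := (e1.and e2).exists
    refine ⟨S₀f k, hS₀f k, fun S hS x => ?_⟩
    have h3 := hest k S hS x
    calc |d x S - D| ≤ |d x S - a k| + |a k - D| := abs_sub_le _ _ _
      _ < ε / 3 + ε / 3 := by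
          apply add_lt_add_of_le_of_lt _ hk2
          linarith
      _ < ε := by linarith
  -- Conclusions
  refine ⟨D, ?_, ?_, ?_⟩
  · intro ε hε
    obtain ⟨S₀, hS₀, h⟩ := Psi ε hε
    exact ⟨S₀, hS₀, fun R hR x => h R hR.le x⟩
  · -- D = upDens Γ
    have hTD : Tendsto (densR Γ) atTop (nhds D) := by
      rw [Metric.tendsto_atTop]
      intro ε hε
      obtain ⟨S₀, hS₀, h⟩ := Psi (ε / 2) (by linarith)
      refine ⟨S₀, fun S hS => ?_⟩
      have hub : ∀ x, d x S ≤ D + ε / 2 := fun x => by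
        have := (abs_lt.1 (h S hS x)).2
        linarith
      have hbdd : BddAbove (Set.range (fun x => d x S)) :=
        ⟨D + ε / 2, by rintro _ ⟨x, rfl⟩; exact hub x⟩
      have hdens : densR Γ S = ⨆ x, d x S := rfl
      have hsup_le : densR Γ S ≤ D + ε / 2 := by
        rw [hdens]; exact ciSup_le hub
      have hsup_ge : D - ε / 2 ≤ densR Γ S := by
        rw [hdens]
        refine le_trans ?_ (le_ciSup hbdd 0)
        have := (abs_lt.1 (h S hS 0)).1
        linarith
      rw [Real.dist_eq, abs_lt]
      constructor <;> [linarith; linarith]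
    exact hTD.limsup_eq.symm
  · intro x
    rw [Metric.tendsto_atTop]
    intro ε hε
    obtain ⟨S₀, hS₀, h⟩ := Psi (ε / 2) (by linarith)
    refine ⟨S₀, fun S hS => ?_⟩
    have := h S hS x
    rw [Real.dist_eq]
    calc |d x S - D| < ε / 2 := this
      _ < ε := by linarith
end
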